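/- Let γ ∈ (0,1) and assume there is a constant C₀ > 0 such that |e_{γ,γ}(ζ)| ≤ C₀/(1+|ζ|), |e_{γ,2γ}(ζ)| ≤ C₀/(1+|ζ|) and |e_{γ,2γ−1}(ζ)| ≤ C₀/(1+|ζ|) for every ζ ∈ ℂ with Re ζ ≤ 0. Then there is a constant C > 0, depending only on γ and C₀, such that for every λ > 0 and every r > 0 the function r ↦ r^{γ−1} e_{γ,γ}(−r^γ λ) is differentiable and | d/dr ( r^{γ−1} e_{γ,γ}(−r^γ λ) ) | ≤ C · r^{γ−2}. -/

import Mathlib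

/-- Two-parameter Mittag-Leffler function `e_{γ,μ}(z) = ∑ₖ zᵏ / Γ(kγ+μ)`,
with the reciprocal Gamma interpreted as `0` at non-positive integers. -/
noncomputable def mlf (γ μ : ℝ) (z : ℂ) : ℂ :=
  ∑' k : ℕ, (Complex.Gamma (((k : ℝ) * γ + μ : ℝ) : ℂ))⁻¹ * z ^ k

/-- Hyperbolic contour `z(y) = b (cosh y + i sinh y)`. -/
noncomputable def zc (b : ℝ) (y : ℂ) : ℂ :=
  (b : ℂ) * (Complex.cosh y + Complex.I * Complex.sinh y)

/-- Derivative of the hyperbolic contour, `z'(y) = b (sinh y + i cosh y)`. -/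
noncomputable def zcDeriv (b : ℝ) (y : ℂ) : ℂ :=
  (b : ℂ) * (Complex.sinh y + Complex.I * Complex.cosh y)

/-!
Write `ρ ^ (μ - 1) * e_{γ,μ}(ρ ^ γ * w) = ∑ₖ wᵏ ρ^(kγ + μ - 1) / Γ(kγ + μ)`. Differentiating
termwise and using `s / Γ(s + 1) = 1 / Γ(s)` turns the derivative into
`r ^ (μ - 2) * e_{γ,μ-1}(r ^ γ * w)`; the series converge on all of `ℂ` by the ratio test, since
log-convexity of `Γ` gives `Γ(x + γ) ≥ (x - 1) ^ γ Γ(x)`. For `μ = γ`, splitting off the constant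
term gives `e_{γ,γ-1}(ζ) = 1 / Γ(γ - 1) + ζ e_{γ,2γ-1}(ζ)`, and the decay `C₀ / (1 + |ζ|)` of
`e_{γ,2γ-1}` on the left half-plane bounds the second summand by `C₀`.
-/

open Set Filter

lemma Complex.Gamma_inv_eq_mul_Gamma_add_one_inv (s : ℂ) :
    (Gamma s)⁻¹ = s * (Gamma (s + 1))⁻¹ := by
  rcases eq_or_ne s 0 with rfl | hs
  · simp [Gamma_zero]
  · rw [Gamma_add_one s hs, mul_inv, ← mul_assoc, mul_inv_cancel₀ hs, one_mul]

lemma Real.rpow_mul_Gamma_le_Gamma_add {x a : ℝ} (hx : 1 < x) (ha : 0 < a) :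
    (x - 1) ^ a * Gamma x ≤ Gamma (x + a) := by
  have hx1 : 0 < x - 1 := sub_pos.2 hx
  have hΓx : 0 < Gamma x := Gamma_pos_of_pos (by linarith)
  have hslope := convexOn_log_Gamma.slope_mono_adjacent (mem_Ioi.2 hx1)
    (mem_Ioi.2 (by linarith : (0 : ℝ) < x + a)) (by linarith : x - 1 < x) (by linarith : x < x + a)
  have hstep : log (Gamma x) - log (Gamma (x - 1)) = log (x - 1) := by
    nth_rw 1 [← sub_add_cancel x 1]
    rw [Gamma_add_one hx1.ne', log_mul hx1.ne' (Gamma_pos_of_pos hx1).ne', add_sub_cancel_right]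
  simp only [Function.comp_apply, sub_sub_cancel, div_one, add_sub_cancel_left, hstep] at hslope
  rw [← log_le_log_iff (by positivity) (Gamma_pos_of_pos (by linarith)),
    log_mul (by positivity) hΓx.ne', log_rpow hx1]
  rw [le_div_iff₀ ha] at hslope
  linarith

lemma Real.rpow_le_rpow_add_rpow_of_mem_Icc {a b y : ℝ} (ha : 0 < a) (hy : y ∈ Icc a b) (p : ℝ) :
    y ^ p ≤ a ^ p + b ^ p := by
  rcases le_total 0 p with hp | hp
  · linarith [rpow_le_rpow (ha.le.trans hy.1) hy.2 hp, rpow_nonneg ha.le p]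
  · linarith [rpow_le_rpow_of_nonpos ha hy.1 hp, rpow_nonneg (ha.le.trans (hy.1.trans hy.2)) p]

lemma norm_mul_le_of_norm_le_div_one_add_norm {R : Type*} [NormedRing R] {ζ w : R} {C : ℝ}
    (hC : 0 ≤ C) (hw : ‖w‖ ≤ C / (1 + ‖ζ‖)) : ‖ζ * w‖ ≤ C := by
  have hpos : 0 < 1 + ‖ζ‖ := by positivity
  calc ‖ζ * w‖ ≤ ‖ζ‖ * (C / (1 + ‖ζ‖)) := (norm_mul_le _ _).trans (by gcongr)
    _ ≤ C := by
      rw [mul_div_assoc', div_le_iff₀ hpos]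
      linarith

noncomputable def mlfCoeff (γ μ : ℝ) (k : ℕ) : ℂ :=
  (Complex.Gamma (((k : ℝ) * γ + μ : ℝ) : ℂ))⁻¹

lemma mlf_eq_tsum (γ μ : ℝ) (z : ℂ) : mlf γ μ z = ∑' k, mlfCoeff γ μ k * z ^ k := rfl

lemma norm_mlfCoeff (γ μ : ℝ) (k : ℕ) : ‖mlfCoeff γ μ k‖ = |Real.Gamma (k * γ + μ)|⁻¹ := by
  rw [mlfCoeff, norm_inv, Complex.Gamma_ofReal, Complex.norm_real, Real.norm_eq_abs]

lemma mlfCoeff_zero (γ μ : ℝ) : mlfCoeff γ μ 0 = (Complex.Gamma μ)⁻¹ := by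
  simp [mlfCoeff]

lemma mlfCoeff_succ (γ μ : ℝ) (k : ℕ) : mlfCoeff γ μ (k + 1) = mlfCoeff γ (μ + γ) k := by
  simp only [mlfCoeff, Nat.cast_succ]
  ring_nf

lemma mlfCoeff_sub_one (γ μ : ℝ) (k : ℕ) :
    mlfCoeff γ (μ - 1) k = ((k * γ + μ - 1 : ℝ) : ℂ) * mlfCoeff γ μ k := by
  rw [mlfCoeff, mlfCoeff, Complex.Gamma_inv_eq_mul_Gamma_add_one_inv]
  push_cast
  ring_nf

lemma summable_norm_mlfCoeff_mul_pow {γ : ℝ} (hγ : 0 < γ) (μ : ℝ) (z : ℂ) :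
    Summable fun k => ‖mlfCoeff γ μ k * z ^ k‖ := by
  refine summable_of_ratio_norm_eventually_le one_half_lt_one ?_
  have hlin : Tendsto (fun k : ℕ => k * γ + μ - 1) atTop atTop :=
    tendsto_atTop_add_const_right _ _
      (tendsto_atTop_add_const_right _ _ (tendsto_natCast_atTop_atTop.atTop_mul_const hγ))
  filter_upwards [hlin.eventually_gt_atTop 0,
    (tendsto_rpow_atTop hγ |>.comp hlin).eventually_ge_atTop (2 * ‖z‖)] with k hx hgrowth
  set x : ℝ := k * γ + μ
  have hx1 : 1 < x := by linarith
  have hΓx : 0 < Real.Gamma x := Real.Gamma_pos_of_pos (by linarith)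
  have hΓxγ : 0 < Real.Gamma (x + γ) := Real.Gamma_pos_of_pos (by linarith)
  have hratio : 2 * ‖z‖ * Real.Gamma x ≤ Real.Gamma (x + γ) :=
    (mul_le_mul_of_nonneg_right hgrowth hΓx.le).trans (Real.rpow_mul_Gamma_le_Gamma_add hx1 hγ)
  have hsucc : ((k + 1 : ℕ) : ℝ) * γ + μ = x + γ := by push_cast; ring
  rw [norm_norm, norm_norm, norm_mul, norm_mul, norm_mlfCoeff, norm_mlfCoeff, hsucc,
    abs_of_pos hΓx, abs_of_pos hΓxγ, norm_pow, norm_pow, pow_succ]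
  field_simp
  linarith [mul_le_mul_of_nonneg_left hratio (pow_nonneg (norm_nonneg z) k)]

lemma mlf_eq_Gamma_inv_add_mul_mlf {γ : ℝ} (hγ : 0 < γ) (μ : ℝ) (z : ℂ) :
    mlf γ μ z = (Complex.Gamma μ)⁻¹ + z * mlf γ (μ + γ) z := by
  rw [mlf_eq_tsum, (summable_norm_mlfCoeff_mul_pow hγ μ z).of_norm.tsum_eq_zero_add,
    mlf_eq_tsum, ← tsum_mul_left, mlfCoeff_zero, pow_zero, mul_one]
  congr 1
  refine tsum_congr fun k => ?_
  rw [mlfCoeff_succ, pow_succ]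
  ring

lemma mlfCoeff_mul_pow_mul_rpow {ρ : ℝ} (hρ : 0 < ρ) (γ μ : ℝ) (w : ℂ) (k : ℕ) :
    mlfCoeff γ μ k * w ^ k * ((ρ ^ (k * γ + μ - 1) : ℝ) : ℂ) =
      ((ρ ^ (μ - 1) : ℝ) : ℂ) * (mlfCoeff γ μ k * (((ρ ^ γ : ℝ) : ℂ) * w) ^ k) := by
  rw [add_sub_assoc, Real.rpow_add hρ, mul_comm (k : ℝ), Real.rpow_mul hρ.le, Real.rpow_natCast]
  push_cast
  ring

lemma rpow_mul_mlf_eq_tsum {ρ : ℝ} (hρ : 0 < ρ) (γ μ : ℝ) (w : ℂ) :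
    ((ρ ^ (μ - 1) : ℝ) : ℂ) * mlf γ μ (((ρ ^ γ : ℝ) : ℂ) * w) =
      ∑' k : ℕ, mlfCoeff γ μ k * w ^ k * ((ρ ^ (k * γ + μ - 1) : ℝ) : ℂ) := by
  simp_rw [mlfCoeff_mul_pow_mul_rpow hρ, tsum_mul_left, mlf_eq_tsum]

lemma hasDerivAt_rpow_mul_mlf {γ : ℝ} (hγ : 0 < γ) (μ : ℝ) (w : ℂ) {r : ℝ} (hr : 0 < r) :
    HasDerivAt (fun ρ : ℝ => ((ρ ^ (μ - 1) : ℝ) : ℂ) * mlf γ μ (((ρ ^ γ : ℝ) : ℂ) * w))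
      (((r ^ (μ - 2) : ℝ) : ℂ) * mlf γ (μ - 1) (((r ^ γ : ℝ) : ℂ) * w)) r := by
  set g : ℕ → ℝ → ℂ := fun k ρ => mlfCoeff γ μ k * w ^ k * ((ρ ^ (k * γ + μ - 1) : ℝ) : ℂ)
  set g' : ℕ → ℝ → ℂ := fun k ρ =>
    mlfCoeff γ (μ - 1) k * w ^ k * ((ρ ^ (k * γ + (μ - 1) - 1) : ℝ) : ℂ)
  set B : ℝ := (r / 2) ^ (μ - 2) + (2 * r) ^ (μ - 2)
  have hr_mem : r ∈ Ioo (r / 2) (2 * r) := ⟨by linarith, by linarith⟩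
  have hderiv : ∀ k, ∀ y ∈ Ioo (r / 2) (2 * r), HasDerivAt (g k) (g' k y) y := by
    intro k y hy
    have hpow := (Real.hasDerivAt_rpow_const (p := k * γ + μ - 1)
      (Or.inl (by linarith [hy.1] : (0 : ℝ) < y).ne')).ofReal_comp
    rw [show g' k y = mlfCoeff γ μ k * w ^ k *
        (((k * γ + μ - 1) * y ^ (k * γ + μ - 1 - 1) : ℝ) : ℂ) by
      simp only [g', mlfCoeff_sub_one, sub_sub, add_sub_assoc]
      push_cast
      ring]
    exact hpow.const_mul _
  have hbound : ∀ k, ∀ y ∈ Ioo (r / 2) (2 * r),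
      ‖g' k y‖ ≤ ‖mlfCoeff γ (μ - 1) k * (((2 * r) ^ γ : ℝ) * w) ^ k‖ * B := by
    intro k y hy
    have hy0 : 0 < y := by linarith [hy.1]
    simp only [g', mlfCoeff_mul_pow_mul_rpow hy0, norm_mul, norm_pow, Complex.norm_real,
      Real.norm_eq_abs, abs_of_nonneg (Real.rpow_nonneg hy0.le _),
      abs_of_nonneg (Real.rpow_nonneg (by positivity : (0 : ℝ) ≤ 2 * r) _)]
    rw [mul_comm]
    gcongr
    · exact hy.2.le
    · rw [sub_sub, one_add_one_eq_two]
      exact Real.rpow_le_rpow_add_rpow_of_mem_Icc (by positivity) (Ioo_subset_Icc_self hy) _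
  have hsummable : Summable fun k => g k r := by
    simp_rw [g, mlfCoeff_mul_pow_mul_rpow hr]
    exact (summable_norm_mlfCoeff_mul_pow hγ μ _).of_norm.mul_left _
  have hseries := hasDerivAt_tsum_of_isPreconnected
    ((summable_norm_mlfCoeff_mul_pow hγ (μ - 1) _).mul_right B) isOpen_Ioo isPreconnected_Ioo
    hderiv hbound hr_mem hsummable hr_mem
  rw [show μ - 2 = μ - 1 - 1 by ring, rpow_mul_mlf_eq_tsum hr]
  refine hseries.congr_of_eventuallyEq ?_
  filter_upwards [Ioi_mem_nhds hr] with ρ hρ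
  exact rpow_mul_mlf_eq_tsum hρ γ μ w

theorem stmt19_general (γ C₀ : ℝ) (hγ : γ ∈ Set.Ioo (0 : ℝ) 1) (hC₀ : 0 < C₀)
    (h3 : ∀ ζ : ℂ, ζ.re ≤ 0 →
      ‖mlf γ (2 * γ - 1) ζ‖ ≤ C₀ / (1 + ‖ζ‖)) :
    ∃ C : ℝ, 0 < C ∧ ∀ lam : ℝ, 0 < lam → ∀ r : ℝ, 0 < r →
      DifferentiableAt ℝ
        (fun ρ : ℝ => ((ρ ^ (γ - 1) : ℝ) : ℂ) * mlf γ γ (-((ρ ^ γ * lam : ℝ) : ℂ))) r ∧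
      ‖deriv
          (fun ρ : ℝ => ((ρ ^ (γ - 1) : ℝ) : ℂ) * mlf γ γ (-((ρ ^ γ * lam : ℝ) : ℂ))) r‖
        ≤ C * r ^ (γ - 2) := by
  refine ⟨‖(Complex.Gamma ((γ - 1 : ℝ) : ℂ))⁻¹‖ + C₀, by positivity, fun lam hlam r hr => ?_⟩
  have hfun : (fun ρ : ℝ => ((ρ ^ (γ - 1) : ℝ) : ℂ) * mlf γ γ (-((ρ ^ γ * lam : ℝ) : ℂ))) =
      fun ρ : ℝ => ((ρ ^ (γ - 1) : ℝ) : ℂ) * mlf γ γ (((ρ ^ γ : ℝ) : ℂ) * -(lam : ℂ)) := by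
    funext ρ
    push_cast
    ring_nf
  have hderiv := hasDerivAt_rpow_mul_mlf hγ.1 γ (-(lam : ℂ)) hr
  rw [hfun, hderiv.deriv]
  refine ⟨hderiv.differentiableAt, ?_⟩
  have hre : (((r ^ γ : ℝ) : ℂ) * -(lam : ℂ)).re ≤ 0 := by
    simp only [Complex.re_ofReal_mul, Complex.neg_re, Complex.ofReal_re]
    exact mul_nonpos_of_nonneg_of_nonpos (Real.rpow_nonneg hr.le γ) (neg_nonpos.2 hlam.le)
  rw [mlf_eq_Gamma_inv_add_mul_mlf hγ.1, show γ - 1 + γ = 2 * γ - 1 by ring, norm_mul,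
    Complex.norm_real, Real.norm_of_nonneg (Real.rpow_nonneg hr.le _), mul_comm]
  gcongr
  exact (norm_add_le _ _).trans
    (add_le_add_right (norm_mul_le_of_norm_le_div_one_add_norm hC₀.le (h3 _ hre)) _)

/-- `r ↦ r^{γ-1} e_{γ,γ}(-r^γ λ)` is differentiable for every
`r > 0`, with `|d/dr (r^{γ-1} e_{γ,γ}(-r^γ λ))| ≤ C r^{γ-2}`, where `C` depends
only on `γ` and `C₀`. -/
theorem stmt19 (γ C₀ : ℝ) (hγ : γ ∈ Set.Ioo (0 : ℝ) 1) (hC₀ : 0 < C₀)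
    (h1 : ∀ ζ : ℂ, ζ.re ≤ 0 → ‖mlf γ γ ζ‖ ≤ C₀ / (1 + ‖ζ‖))
    (h2 : ∀ ζ : ℂ, ζ.re ≤ 0 →
      ‖mlf γ (2 * γ) ζ‖ ≤ C₀ / (1 + ‖ζ‖))
    (h3 : ∀ ζ : ℂ, ζ.re ≤ 0 →
      ‖mlf γ (2 * γ - 1) ζ‖ ≤ C₀ / (1 + ‖ζ‖)) :
    ∃ C : ℝ, 0 < C ∧ ∀ lam : ℝ, 0 < lam → ∀ r : ℝ, 0 < r →
      DifferentiableAt ℝ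
        (fun ρ : ℝ => ((ρ ^ (γ - 1) : ℝ) : ℂ) * mlf γ γ (-((ρ ^ γ * lam : ℝ) : ℂ))) r ∧
      ‖deriv
          (fun ρ : ℝ => ((ρ ^ (γ - 1) : ℝ) : ℂ) * mlf γ γ (-((ρ ^ γ * lam : ℝ) : ℂ))) r‖
        ≤ C * r ^ (γ - 2) :=
  stmt19_general γ C₀ hγ hC₀ h3
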